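/- arXiv:1602.03312 — 2 statements merged into one kernel-verified Lean document; each statement's English description precedes it below -/
import Mathlib

section
/- Let S = {1,...,m} be a finite set and φ : S × S → {±1} a symmetric function. Then there exists n ≤ 2m and a map σ : S → ℤ₂ⁿ such that φ(i,j) = (-1)^⟨σ(i),σ(j)⟩ for all i,j ∈ S, where ⟨·,·⟩ is the standard scalar product on ℤ₂ⁿ (sum of componentwise products, mod 2 determining the sign). -/
/-!
Encode the signs as a symmetric matrix `B` over `ZMod 2`; it suffices to write `B = A * Aᵀ`
with `A` having `2m` columns. Put `u i = 1 + B i i` (`diagDefect`). Since `x * x = x` in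
`ZMod 2`, the matrix `B + 1 + u uᵀ` has zero diagonal, so it is `L + Lᵀ` for a strictly lower
triangular `L` (`strictLowerFactor`). In characteristic two `(1 + L)(1 + L)ᵀ + L Lᵀ = 1 + L + Lᵀ`,
and the last column of `L` vanishes, so `u` can be stored there:
`A = [1 + L | L with last column u]` has `A * Aᵀ = B`.
-/

open Matrix

namespace Matrix

section

variable {m n R : Type*} [Fintype n] [CommSemiring R]

theorem one_add_mul_transpose_one_add_add_mul_transpose [CharP R 2] [DecidableEq n]
    (L : Matrix n n R) : (1 + L) * (1 + L)ᵀ + L * Lᵀ = 1 + L + Lᵀ := by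
  have hLL : L * Lᵀ + L * Lᵀ = 0 := by
    ext i j
    exact CharTwo.add_self_eq_zero _
  have hexpand : (1 + L) * (1 + L)ᵀ = 1 + L + Lᵀ + L * Lᵀ := by
    simp only [transpose_add, transpose_one, add_mul, mul_add, one_mul, mul_one]
    abel
  rw [hexpand, add_assoc, hLL, add_zero]

theorem updateCol_mul_transpose_updateCol [DecidableEq n] (M : Matrix m n R) {c : n}
    (hc : ∀ i, M i c = 0) (u : m → R) :
    M.updateCol c u * (M.updateCol c u)ᵀ = M * Mᵀ + vecMulVec u u := by
  ext i j
  have hterm : ∀ k, M.updateCol c u i k * M.updateCol c u j k =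
      M i k * M j k + if k = c then u i * u j else 0 := by
    intro k
    by_cases hk : k = c
    · subst hk
      simp [hc]
    · simp [hk]
  simp only [mul_apply, transpose_apply, hterm, Finset.sum_add_distrib, Finset.sum_ite_eq',
    Finset.mem_univ, if_true, add_apply, vecMulVec_apply]

end

section

variable {ι : Type*} [LinearOrder ι]

def diagDefect (B : Matrix ι ι (ZMod 2)) (i : ι) : ZMod 2 := 1 + B i i

def strictLowerFactor (B : Matrix ι ι (ZMod 2)) : Matrix ι ι (ZMod 2) :=
  of fun i k => if k < i then B i k + diagDefect B i * diagDefect B k else 0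

theorem strictLowerFactor_apply_of_not_lt (B : Matrix ι ι (ZMod 2)) {i k : ι} (h : ¬k < i) :
    strictLowerFactor B i k = 0 :=
  if_neg h

theorem IsSymm.eq_one_add_strictLowerFactor {B : Matrix ι ι (ZMod 2)} (hB : B.IsSymm) :
    B = 1 + strictLowerFactor B + (strictLowerFactor B)ᵀ +
      vecMulVec (diagDefect B) (diagDefect B) := by
  ext i j
  simp only [add_apply, transpose_apply, vecMulVec_apply, one_apply]
  rcases lt_trichotomy i j with hij | rfl | hji
  · rw [if_neg hij.ne, strictLowerFactor_apply_of_not_lt B hij.not_gt, strictLowerFactor,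
      of_apply, if_pos hij, hB.apply i j]
    generalize B i j = b; generalize diagDefect B i = x; generalize diagDefect B j = y
    revert b x y; decide
  · rw [if_pos rfl, strictLowerFactor_apply_of_not_lt B (lt_irrefl i), diagDefect]
    generalize B i i = b
    revert b; decide
  · rw [if_neg hji.ne', strictLowerFactor_apply_of_not_lt B hji.not_gt, strictLowerFactor,
      of_apply, if_pos hji]
    generalize B i j = b; generalize diagDefect B i = x; generalize diagDefect B j = y
    revert b x y; decide

theorem IsSymm.exists_mul_transpose_eq [Fintype ι] [OrderTop ι] {B : Matrix ι ι (ZMod 2)}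
    (hB : B.IsSymm) : ∃ A : Matrix ι (ι ⊕ ι) (ZMod 2), A * Aᵀ = B := by
  set L := strictLowerFactor B
  refine ⟨fromCols (1 + L) (L.updateCol ⊤ (diagDefect B)), ?_⟩
  rw [transpose_fromCols, fromCols_mul_fromRows,
    updateCol_mul_transpose_updateCol L (fun i => strictLowerFactor_apply_of_not_lt B not_top_lt),
    ← add_assoc, one_add_mul_transpose_one_add_add_mul_transpose]
  exact hB.eq_one_add_strictLowerFactor.symm

end

end Matrix

def signExponent (z : ℤ) : ZMod 2 := if z = 1 then 0 else 1

theorem eq_neg_one_pow_signExponent {z : ℤ} (hz : z = 1 ∨ z = -1) :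
    z = (-1) ^ (signExponent z).val := by
  rcases hz with rfl | rfl <;> rfl

/-- For any symmetric sign function `φ` on `S = {1,…,m}` there is `n ≤ 2m`
and a map `σ : S → ℤ₂ⁿ` such that `φ(i,j) = (-1)^⟨σ i, σ j⟩`, where `⟨·,·⟩` is the
standard scalar product on `ℤ₂ⁿ = (ZMod 2)ⁿ`. -/
theorem sign_rule_from_Z2n_scalar_product (m : ℕ) (φ : Fin m → Fin m → ℤ)
    (hpm : ∀ i j, φ i j = 1 ∨ φ i j = -1)
    (hsym : ∀ i j, φ i j = φ j i) :
    ∃ (n : ℕ), n ≤ 2 * m ∧ ∃ σ : Fin m → (Fin n → ZMod 2),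
      ∀ i j, φ i j = (-1 : ℤ) ^ ((∑ k, σ i k * σ j k : ZMod 2)).val := by
  obtain _ | m := m
  · exact ⟨0, le_rfl, fun i => i.elim0, fun i => i.elim0⟩
  have hB : (of fun i j => signExponent (φ i j)).IsSymm := by
    ext i j
    simp only [transpose_apply, of_apply, hsym i j]
  obtain ⟨A, hA⟩ := hB.exists_mul_transpose_eq
  set e := (finSumFinEquiv (m := m + 1) (n := m + 1)).symm
  refine ⟨_, (two_mul _).ge, A.submatrix id e, fun i j => ?_⟩
  have hgram : A.submatrix id e * (A.submatrix id e)ᵀ = of fun i j => signExponent (φ i j) := by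
    rw [transpose_submatrix, submatrix_mul_equiv, hA, submatrix_id_id]
  have hij := congrFun₂ hgram i j
  simp only [mul_apply, transpose_apply, of_apply] at hij
  rw [hij]
  exact eq_neg_one_pow_signExponent (hpm i j)
end

section
/- Let (M,A) be a ringed space of ℝ-algebras such that for every open U, every f ∈ A(U), and every m ∈ U there is a unique λ ∈ ℝ with the property that f - λ·1 is not invertible on any open neighborhood of m. Then the assignment ε_U(f)(m) := λ defines a ring morphism ε_U : A(U) → (functions on U), i.e., ε_U(f+g) = ε_U(f) + ε_U(g) and ε_U(fg) = ε_U(f)·ε_U(g). -/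
/-!
Call `f` singular at `m` if it is invertible on no neighbourhood of `m`. Singular elements are
closed under multiplication by arbitrary elements, and also under addition: if `f + g = u` were a
unit near `m`, then `p = u⁻¹ f` and `q = u⁻¹ g` would be singular at `m` with `p + q = 1`, so both
`λ = 0` and `λ = 1` would make `q - λ` singular, contradicting uniqueness. Since `f - ε(f)(m)` is
singular at `m`, the identities `(f + g) - (a + b) = (f - a) + (g - b)` and
`f g - a b = f (g - b) + b (f - a)` then identify `ε(f + g)(m)` and `ε(f g)(m)`.
-/

open TopologicalSpace

namespace AlgebraPresheaf

variable {M : Type*} [TopologicalSpace M] {R : Type*} [CommRing R]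
  {A : Opens M → Type*} [∀ U, CommRing (A U)] [∀ U, Algebra R (A U)]
  (res : ∀ {U V : Opens M}, V ≤ U → A U →ₐ[R] A V)

def IsSingularAt {U : Opens M} (f : A U) (m : M) : Prop :=
  ∀ (W : Opens M) (h : W ≤ U), m ∈ W → ¬ IsUnit (res h f)

variable {res}

theorem IsSingularAt.mul_left {U : Opens M} {g : A U} {m : M} (hg : IsSingularAt res g m)
    (f : A U) : IsSingularAt res (f * g) m := fun W h hm hu =>
  hg W h hm (isUnit_of_mul_isUnit_right (by rwa [map_mul] at hu))

theorem IsSingularAt.neg {U : Opens M} {f : A U} {m : M} (hf : IsSingularAt res f m) :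
    IsSingularAt res (-f) m := by
  simpa using hf.mul_left (-1)

theorem IsSingularAt.restrict
    (res_comp : ∀ {U V W : Opens M} (h1 : W ≤ V) (h2 : V ≤ U) (f : A U),
      res h1 (res h2 f) = res (h1.trans h2) f)
    {U V : Opens M} {f : A U} {m : M} (hf : IsSingularAt res f m) (h : V ≤ U) :
    IsSingularAt res (res h f) m := fun W hW hm => by
  rw [res_comp]
  exact hf W (hW.trans h) hm

theorem IsSingularAt.nontrivial {U : Opens M} {f : A U} {m : M} (hf : IsSingularAt res f m)
    (hm : m ∈ U) : Nontrivial (A U) := by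
  by_contra hA
  rw [not_nontrivial_iff_subsingleton] at hA
  exact hf U le_rfl hm (isUnit_of_subsingleton _)

theorem isSingularAt_zero
    (huniq : ∀ (U : Opens M) (f : A U) (m : M), m ∈ U →
      ∃! lam : R, IsSingularAt res (f - algebraMap R (A U) lam) m)
    {U : Opens M} {m : M} : IsSingularAt res (0 : A U) m :=
  fun W h hmW => by
    obtain ⟨lam, hlam, -⟩ := huniq W 0 m hmW
    have := hlam.nontrivial hmW
    rw [map_zero]
    exact not_isUnit_zero

theorem IsSingularAt.add [Nontrivial R]
    (huniq : ∀ (U : Opens M) (f : A U) (m : M), m ∈ U →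
      ∃! lam : R, IsSingularAt res (f - algebraMap R (A U) lam) m)
    (res_comp : ∀ {U V W : Opens M} (h1 : W ≤ V) (h2 : V ≤ U) (f : A U),
      res h1 (res h2 f) = res (h1.trans h2) f)
    {U : Opens M} {f g : A U} {m : M} (hf : IsSingularAt res f m)
    (hg : IsSingularAt res g m) : IsSingularAt res (f + g) m := by
  rintro W h hm ⟨u, hu⟩
  set p := (↑u⁻¹ : A W) * res h f
  set q := (↑u⁻¹ : A W) * res h g
  have hpq : p + q = 1 := by rw [← mul_add, ← map_add, ← hu, Units.inv_mul]
  have hp : IsSingularAt res p m := (hf.restrict res_comp h).mul_left _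
  have hq : IsSingularAt res q m := (hg.restrict res_comp h).mul_left _
  have hq_zero : IsSingularAt res (q - algebraMap R (A W) 0) m := by simpa using hq
  have hq_one : IsSingularAt res (q - algebraMap R (A W) 1) m := by
    rw [map_one, ← hpq, sub_add_cancel_right]
    exact hp.neg
  exact zero_ne_one ((huniq W q m hm).unique hq_zero hq_one)

section BaseValue

variable (huniq : ∀ (U : Opens M) (f : A U) (m : M), m ∈ U →
  ∃! lam : R, IsSingularAt res (f - algebraMap R (A U) lam) m)

open Classical in
noncomputable def baseValue (U : Opens M) (f : A U) (m : M) : R :=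
  if hm : m ∈ U then (huniq U f m hm).choose else 0

theorem isSingularAt_sub_baseValue {U : Opens M} (f : A U) {m : M} (hm : m ∈ U) :
    IsSingularAt res (f - algebraMap R (A U) (baseValue huniq U f m)) m := by
  rw [baseValue, dif_pos hm]
  exact (huniq U f m hm).choose_spec.1

theorem baseValue_eq_of_isSingularAt {U : Opens M} {f : A U} {m : M} (hm : m ∈ U) {lam : R}
    (h : IsSingularAt res (f - algebraMap R (A U) lam) m) : baseValue huniq U f m = lam :=
  (huniq U f m hm).unique (isSingularAt_sub_baseValue huniq f hm) h

theorem baseValue_add [Nontrivial R]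
    (res_comp : ∀ {U V W : Opens M} (h1 : W ≤ V) (h2 : V ≤ U) (f : A U),
      res h1 (res h2 f) = res (h1.trans h2) f)
    {U : Opens M} (f g : A U) {m : M} (hm : m ∈ U) :
    baseValue huniq U (f + g) m = baseValue huniq U f m + baseValue huniq U g m := by
  set a := baseValue huniq U f m
  set b := baseValue huniq U g m
  have hsplit : f + g - algebraMap R (A U) (a + b)
      = (f - algebraMap R (A U) a) + (g - algebraMap R (A U) b) := by
    rw [map_add]; ring
  apply baseValue_eq_of_isSingularAt huniq hm
  rw [hsplit]
  exact (isSingularAt_sub_baseValue huniq f hm).add huniq res_comp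
    (isSingularAt_sub_baseValue huniq g hm)

theorem baseValue_mul [Nontrivial R]
    (res_comp : ∀ {U V W : Opens M} (h1 : W ≤ V) (h2 : V ≤ U) (f : A U),
      res h1 (res h2 f) = res (h1.trans h2) f)
    {U : Opens M} (f g : A U) {m : M} (hm : m ∈ U) :
    baseValue huniq U (f * g) m = baseValue huniq U f m * baseValue huniq U g m := by
  set a := baseValue huniq U f m
  set b := baseValue huniq U g m
  have hsplit : f * g - algebraMap R (A U) (a * b)
      = f * (g - algebraMap R (A U) b) + algebraMap R (A U) b * (f - algebraMap R (A U) a) := by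
    rw [map_mul]; ring
  apply baseValue_eq_of_isSingularAt huniq hm
  rw [hsplit]
  exact ((isSingularAt_sub_baseValue huniq g hm).mul_left f).add huniq res_comp
    ((isSingularAt_sub_baseValue huniq f hm).mul_left _)

theorem baseValue_one {U : Opens M} {m : M} (hm : m ∈ U) : baseValue huniq U (1 : A U) m = 1 :=
  baseValue_eq_of_isSingularAt huniq hm (by simpa using isSingularAt_zero huniq)

end BaseValue

end AlgebraPresheaf

theorem base_projection_is_ring_morphism_general {M : Type*} [TopologicalSpace M]
    (A : Opens M → Type*) [∀ U, CommRing (A U)] [∀ U, Algebra ℝ (A U)]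
    (res : ∀ {U V : Opens M}, V ≤ U → A U →ₐ[ℝ] A V)
    (res_comp : ∀ {U V W : Opens M} (h1 : W ≤ V) (h2 : V ≤ U) (f : A U),
      res h1 (res h2 f) = res (h1.trans h2) f)
    (huniq : ∀ (U : Opens M) (f : A U) (m : M), m ∈ U → ∃! lam : ℝ,
      ∀ (W : Opens M) (h : W ≤ U), m ∈ W →
        ¬ IsUnit (res h (f - algebraMap ℝ (A U) lam))) :
    ∃ ε : ∀ U : Opens M, A U → M → ℝ,
      (∀ (U : Opens M) (f : A U) (m : M), m ∈ U → ∀ (W : Opens M) (h : W ≤ U), m ∈ W →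
        ¬ IsUnit (res h (f - algebraMap ℝ (A U) (ε U f m)))) ∧
      (∀ (U : Opens M) (f g : A U) (m : M), m ∈ U →
        ε U (f + g) m = ε U f m + ε U g m) ∧
      (∀ (U : Opens M) (f g : A U) (m : M), m ∈ U →
        ε U (f * g) m = ε U f m * ε U g m) ∧
      (∀ (U : Opens M) (m : M), m ∈ U → ε U 1 m = 1) := by
  refine ⟨AlgebraPresheaf.baseValue huniq, ?_, ?_, ?_, ?_⟩
  · exact fun U f m hm => AlgebraPresheaf.isSingularAt_sub_baseValue huniq f hm
  · exact fun U f g m hm => AlgebraPresheaf.baseValue_add huniq res_comp f g hm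
  · exact fun U f g m hm => AlgebraPresheaf.baseValue_mul huniq res_comp f g hm
  · exact fun U m hm => AlgebraPresheaf.baseValue_one huniq hm

/-- Let `(M, A)` be a ringed space of `ℝ`-algebras (a presheaf of
commutative `ℝ`-algebras on `M`) such that for every open `U`, every `f ∈ A(U)` and every
`m ∈ U` there is a unique `λ ∈ ℝ` such that `f - λ·1` is not invertible on any open
neighborhood of `m`. Then `ε_U(f)(m) := λ` defines a ring morphism:
`ε_U(f+g) = ε_U f + ε_U g`, `ε_U(f·g) = ε_U f · ε_U g` (and `ε_U 1 = 1`). -/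
theorem base_projection_is_ring_morphism {M : Type*} [TopologicalSpace M]
    (A : Opens M → Type*) [∀ U, CommRing (A U)] [∀ U, Algebra ℝ (A U)]
    (res : ∀ {U V : Opens M}, V ≤ U → A U →ₐ[ℝ] A V)
    (res_refl : ∀ (U : Opens M) (f : A U), res (le_refl U) f = f)
    (res_comp : ∀ {U V W : Opens M} (h1 : W ≤ V) (h2 : V ≤ U) (f : A U),
      res h1 (res h2 f) = res (h1.trans h2) f)
    (huniq : ∀ (U : Opens M) (f : A U) (m : M), m ∈ U → ∃! lam : ℝ,
      ∀ (W : Opens M) (h : W ≤ U), m ∈ W →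
        ¬ IsUnit (res h (f - algebraMap ℝ (A U) lam))) :
    ∃ ε : ∀ U : Opens M, A U → M → ℝ,
      (∀ (U : Opens M) (f : A U) (m : M), m ∈ U → ∀ (W : Opens M) (h : W ≤ U), m ∈ W →
        ¬ IsUnit (res h (f - algebraMap ℝ (A U) (ε U f m)))) ∧
      (∀ (U : Opens M) (f g : A U) (m : M), m ∈ U →
        ε U (f + g) m = ε U f m + ε U g m) ∧
      (∀ (U : Opens M) (f g : A U) (m : M), m ∈ U →
        ε U (f * g) m = ε U f m * ε U g m) ∧
      (∀ (U : Opens M) (m : M), m ∈ U → ε U 1 m = 1) :=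
  base_projection_is_ring_morphism_general A res res_comp huniq
end
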